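/- arXiv:1410.1380 — 4 statements merged into one kernel-verified Lean document; each statement's English description precedes it below -/
import Mathlib

section
/- Let d₀ and d₁ be two bi-invariant metrics on the free group F₃ with free generators a, b, c, and let K > 0 be such that there exists w ∈ F₃ with |d₀(w, 1) − d₁(w, 1)| ≥ K·|w| (i.e. dist(d₀, d₁) ≥ K). Suppose ι₀ : (F₃, d₀) → (G, d_G) and ι₁ : (F₃, d₁) → (G, d_G) are isometric group monomorphisms into a group G with bi-invariant metric d_G. Then d_G(ι₀(a), ι₁(a)) + d_G(ι₀(b), ι₁(b)) + d_G(ι₀(c), ι₁(c)) ≥ K. -/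
/-- `d : α → α → ℝ` is a metric on `α`. -/
def IsMetricFun {α : Type*} (d : α → α → ℝ) : Prop :=
  (∀ x y, d x y = 0 ↔ x = y) ∧ (∀ x y, d x y = d y x) ∧
    ∀ x y z, d x z ≤ d x y + d y z

/-- `d` is a bi-invariant metric on the group `G`. -/
def IsBiInvMetric {G : Type*} [Group G] (d : G → G → ℝ) : Prop :=
  IsMetricFun d ∧ (∀ g x y : G, d (g * x) (g * y) = d x y) ∧
    ∀ g x y : G, d (x * g) (y * g) = d x y

/-- If `d₀, d₁` are bi-invariant metrics on `F₃ = ⟨a,b,c⟩` with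
`dist(d₀,d₁) ≥ K` (witnessed by a nontrivial word `w` with `|d₀(w,1) - d₁(w,1)| ≥ K·|w|`),
and `ι₀ : (F₃,d₀) → (G,d_G)`, `ι₁ : (F₃,d₁) → (G,d_G)` are isometric group monomorphisms into
a group with bi-invariant metric, then
`d_G(ι₀ a, ι₁ a) + d_G(ι₀ b, ι₁ b) + d_G(ι₀ c, ι₁ c) ≥ K`. -/
theorem far_metrics_far_embeddings
    (d₀ d₁ : FreeGroup (Fin 3) → FreeGroup (Fin 3) → ℝ)
    (h₀ : IsBiInvMetric d₀) (h₁ : IsBiInvMetric d₁)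
    (K : ℝ) (hK : 0 < K)
    (hdist : ∃ w : FreeGroup (Fin 3), w ≠ 1 ∧
      K * (FreeGroup.norm w : ℝ) ≤ |d₀ w 1 - d₁ w 1|)
    (G : Type) [Group G] (dG : G → G → ℝ) (hG : IsBiInvMetric dG)
    (ι₀ ι₁ : FreeGroup (Fin 3) →* G)
    (hι₀inj : Function.Injective ι₀) (hι₁inj : Function.Injective ι₁)
    (hι₀iso : ∀ u v : FreeGroup (Fin 3), dG (ι₀ u) (ι₀ v) = d₀ u v)
    (hι₁iso : ∀ u v : FreeGroup (Fin 3), dG (ι₁ u) (ι₁ v) = d₁ u v) :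
    K ≤ dG (ι₀ (FreeGroup.of 0)) (ι₁ (FreeGroup.of 0)) +
        dG (ι₀ (FreeGroup.of 1)) (ι₁ (FreeGroup.of 1)) +
        dG (ι₀ (FreeGroup.of 2)) (ι₁ (FreeGroup.of 2)) := by

  obtain ⟨⟨hd_eq, hd_symm, hd_tri⟩, hd_left, hd_right⟩ := hG
  set S := dG (ι₀ (FreeGroup.of 0)) (ι₁ (FreeGroup.of 0)) +
        dG (ι₀ (FreeGroup.of 1)) (ι₁ (FreeGroup.of 1)) +
        dG (ι₀ (FreeGroup.of 2)) (ι₁ (FreeGroup.of 2)) with hS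
  have hnonneg : ∀ x y : G, 0 ≤ dG x y := by
    intro x y
    have h1 := hd_tri x y x
    have h0 : dG x x = 0 := (hd_eq x x).2 rfl
    have h2 := hd_symm x y
    linarith
  have hinv : ∀ u v : G, dG u⁻¹ v⁻¹ = dG u v := by
    intro u v
    have h1 := hd_left u u⁻¹ v⁻¹
    have h2 := hd_right v 1 (u * v⁻¹)
    simp only [mul_inv_cancel, one_mul, inv_mul_cancel_right] at h1 h2
    rw [← h1, ← h2, hd_symm]
  have hletter : ∀ i : Fin 3, dG (ι₀ (FreeGroup.of i)) (ι₁ (FreeGroup.of i)) ≤ S := by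
    intro i
    have n0 := hnonneg (ι₀ (FreeGroup.of 0)) (ι₁ (FreeGroup.of 0))
    have n1 := hnonneg (ι₀ (FreeGroup.of 1)) (ι₁ (FreeGroup.of 1))
    have n2 := hnonneg (ι₀ (FreeGroup.of 2)) (ι₁ (FreeGroup.of 2))
    match i with
    | 0 => linarith
    | 1 => linarith
    | 2 => linarith
  have hmulbd : ∀ x u : FreeGroup (Fin 3),
      dG (ι₀ (x * u)) (ι₁ (x * u)) ≤ dG (ι₀ x) (ι₁ x) + dG (ι₀ u) (ι₁ u) := by
    intro x u
    have h1 := hd_tri (ι₀ x * ι₀ u) (ι₀ x * ι₁ u) (ι₁ x * ι₁ u)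
    have h2 := hd_left (ι₀ x) (ι₀ u) (ι₁ u)
    have h3 := hd_right (ι₁ u) (ι₀ x) (ι₁ x)
    simp only [map_mul]
    linarith
  have key : ∀ L : List (Fin 3 × Bool),
      dG (ι₀ (FreeGroup.mk L)) (ι₁ (FreeGroup.mk L)) ≤ (L.length : ℝ) * S := by
    intro L
    induction L with
    | nil =>
      have : FreeGroup.mk ([] : List (Fin 3 × Bool)) = 1 := rfl
      simp [this, (hd_eq 1 1).2 rfl]
    | cons p L ih =>
      have hsplit : FreeGroup.mk (p :: L) = FreeGroup.mk [p] * FreeGroup.mk L := by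
        rw [FreeGroup.mul_mk]; rfl
      have hone : dG (ι₀ (FreeGroup.mk [p])) (ι₁ (FreeGroup.mk [p])) ≤ S := by
        obtain ⟨i, b⟩ := p
        cases b with
        | true =>
          have : FreeGroup.mk [(i, true)] = FreeGroup.of i := rfl
          rw [this]; exact hletter i
        | false =>
          have : (FreeGroup.of i)⁻¹ = FreeGroup.mk [(i, false)] := by
            rw [FreeGroup.of, FreeGroup.inv_mk]; rfl
          rw [← this, map_inv, map_inv, hinv]
          exact hletter i
      have := hmulbd (FreeGroup.mk [p]) (FreeGroup.mk L)
      rw [hsplit]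
      calc dG (ι₀ (FreeGroup.mk [p] * FreeGroup.mk L))
            (ι₁ (FreeGroup.mk [p] * FreeGroup.mk L))
          ≤ dG (ι₀ (FreeGroup.mk [p])) (ι₁ (FreeGroup.mk [p])) +
            dG (ι₀ (FreeGroup.mk L)) (ι₁ (FreeGroup.mk L)) := this
        _ ≤ S + (L.length : ℝ) * S := by linarith
        _ = ((p :: L).length : ℝ) * S := by
            simp [List.length_cons]; ring
  obtain ⟨w, hw1, hwK⟩ := hdist
  have hwbd : dG (ι₀ w) (ι₁ w) ≤ (FreeGroup.norm w : ℝ) * S := by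
    have := key w.toWord
    rwa [FreeGroup.mk_toWord] at this
  have habs : |d₀ w 1 - d₁ w 1| ≤ dG (ι₀ w) (ι₁ w) := by
    have e0 : d₀ w 1 = dG (ι₀ w) 1 := by rw [← hι₀iso, map_one]
    have e1 : d₁ w 1 = dG (ι₁ w) 1 := by rw [← hι₁iso, map_one]
    have t1 := hd_tri (ι₀ w) (ι₁ w) 1
    have t2 := hd_tri (ι₁ w) (ι₀ w) 1
    have hs := hd_symm (ι₀ w) (ι₁ w)
    rw [abs_sub_le_iff]
    constructor <;> [rw [e0, e1]; rw [e0, e1]] <;> linarith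
  have hn1 : 1 ≤ FreeGroup.norm w := by
    rcases Nat.eq_zero_or_pos (FreeGroup.norm w) with h | h
    · exact absurd (FreeGroup.norm_eq_zero.1 h) hw1
    · exact h
  have hn1' : (1 : ℝ) ≤ (FreeGroup.norm w : ℝ) := by exact_mod_cast hn1
  have hfinal : K * (FreeGroup.norm w : ℝ) ≤ (FreeGroup.norm w : ℝ) * S :=
    le_trans hwK (le_trans habs hwbd)
  nlinarith [hnonneg (ι₀ (FreeGroup.of 0)) (ι₁ (FreeGroup.of 0)),
    hnonneg (ι₀ (FreeGroup.of 1)) (ι₁ (FreeGroup.of 1)),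
    hnonneg (ι₀ (FreeGroup.of 2)) (ι₁ (FreeGroup.of 2))]
end

section
/- Let p be a finitely generated metric on the free group F_n on n generators and let ε > 0. Then there exists a finitely generated metric d on F_n taking only rational values such that for every g ∈ F_n, |p(g, 1) − d(g, 1)| ≤ ε·|g| (i.e. dist(p, d) ≤ ε). -/
/-- `d` is a finitely generated metric on the group `G`: it is a bi-invariant metric and
there is a finite symmetric set `A` containing `1` such that `d a b` is the minimum of
`d a₁ b₁ + ⋯ + d aₘ bₘ` over all decompositions `a = a₁⋯aₘ`, `b = b₁⋯bₘ` with all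
`aᵢ, bᵢ ∈ A`. -/
def IsFinGenMetric {G : Type*} [Group G] (d : G → G → ℝ) : Prop :=
  IsBiInvMetric d ∧ ∃ A : Finset G, (1 : G) ∈ A ∧ (∀ a ∈ A, a⁻¹ ∈ A) ∧
    ∀ a b : G, IsLeast {s : ℝ | ∃ l : List (G × G), (∀ q ∈ l, q.1 ∈ A ∧ q.2 ∈ A) ∧
      (l.map Prod.fst).prod = a ∧ (l.map Prod.snd).prod = b ∧
      s = (l.map fun q => d q.1 q.2).sum} (d a b)

/-- The `K`-bounded variant of a finitely generated metric: `d a b` is the minimum of `K` and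
of the sums `d a₁ b₁ + ⋯ + d aₘ bₘ` over all decompositions with letters in `A`. -/
def IsFinGenMetricBdd {G : Type*} [Group G] (K : ℝ) (d : G → G → ℝ) : Prop :=
  IsBiInvMetric d ∧ ∃ A : Finset G, (1 : G) ∈ A ∧ (∀ a ∈ A, a⁻¹ ∈ A) ∧
    ∀ a b : G, IsLeast {s : ℝ | ∃ l : List (G × G), (∀ q ∈ l, q.1 ∈ A ∧ q.2 ∈ A) ∧
      (l.map Prod.fst).prod = a ∧ (l.map Prod.snd).prod = b ∧
      s = min K ((l.map fun q => d q.1 q.2).sum)} (d a b)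

/-! Round the weight `p x y` of every generating pair up to a multiple of a small rational `c`,
and let `d` be the metric whose value at `(a, b)` is the least rounded cost of a decomposition
of `(a, b)` into generating pairs. All such costs lie in `c ℕ`, so the least one exists and is
rational, and `p ≤ d`. A pair of distinct generators has `p`-weight at least some `μ > 0` and
gains at most `c`, so `d ≤ (1 + c / μ) p`; as `p g 1 ≤ C |g|` on the free group, `c C ≤ ε μ`
gives `d g 1 - p g 1 ≤ ε |g|`. -/

theorem Real.exists_isLeast_of_forall_mem_eq_mul_nat {S : Set ℝ} {c : ℝ} (hc : 0 ≤ c)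
    (hS : S.Nonempty) (h : ∀ s ∈ S, ∃ k : ℕ, s = c * k) : ∃ m, IsLeast S m := by
  have hT : {k : ℕ | c * k ∈ S}.Nonempty := by
    obtain ⟨s, hs⟩ := hS
    obtain ⟨k, rfl⟩ := h s hs
    exact ⟨k, hs⟩
  refine ⟨c * (sInf {k : ℕ | c * k ∈ S} : ℕ), Nat.sInf_mem hT, fun s hs => ?_⟩
  obtain ⟨k, rfl⟩ := h s hs
  exact mul_le_mul_of_nonneg_left (Nat.cast_le.2 (Nat.sInf_le hs)) hc

noncomputable def roundUp (c x : ℝ) : ℝ := c * ⌈x / c⌉₊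

theorem le_roundUp {c : ℝ} (hc : 0 < c) (x : ℝ) : x ≤ roundUp c x := by
  rw [roundUp, ← div_le_iff₀' hc]
  exact Nat.le_ceil _

theorem roundUp_lt {c x : ℝ} (hc : 0 < c) (hx : 0 ≤ x) : roundUp c x < x + c := by
  have := Nat.ceil_lt_add_one (div_nonneg hx hc.le)
  rw [roundUp]
  calc c * ⌈x / c⌉₊ < c * (x / c + 1) := by gcongr
    _ = x + c := by field_simp

@[simp] theorem roundUp_zero (c : ℝ) : roundUp c 0 = 0 := by simp [roundUp]

theorem roundUp_eq_zero_iff {c x : ℝ} (hc : 0 < c) (hx : 0 ≤ x) : roundUp c x = 0 ↔ x = 0 := by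
  simp only [roundUp, mul_eq_zero, hc.ne', false_or, Nat.cast_eq_zero, Nat.ceil_eq_zero,
    div_le_iff₀ hc, zero_mul]
  exact ⟨fun h => le_antisymm h hx, fun h => h.le⟩

theorem roundUp_le_mul {c μ x : ℝ} (hc : 0 < c) (hμ : 0 < μ) (hx : x = 0 ∨ μ ≤ x) :
    roundUp c x ≤ (1 + c / μ) * x := by
  rcases hx with rfl | hx
  · rw [roundUp_zero, mul_zero]
  · have : c ≤ c / μ * x := by rw [div_mul_eq_mul_div, le_div_iff₀ hμ]; gcongr
    linarith [roundUp_lt hc (hμ.le.trans hx)]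

theorem IsMetricFun.nonneg {α : Type*} {d : α → α → ℝ} (hd : IsMetricFun d) (x y : α) :
    0 ≤ d x y := by
  linarith [(hd.1 x x).2 rfl, hd.2.2 x y x, hd.2.1 x y]

theorem IsMetricFun.exists_pos_le_of_ne {α : Type*} {d : α → α → ℝ} (hd : IsMetricFun d)
    (A : Finset α) : ∃ μ > 0, ∀ x ∈ A, ∀ y ∈ A, x ≠ y → μ ≤ d x y := by
  rcases A.offDiag.eq_empty_or_nonempty with hA | hA
  · refine ⟨1, one_pos, fun x hx y hy hxy => ?_⟩
    have : (x, y) ∈ A.offDiag := Finset.mem_offDiag.2 ⟨hx, hy, hxy⟩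
    simp [hA] at this
  · obtain ⟨q, hq, hmin⟩ := A.offDiag.exists_min_image (fun q => d q.1 q.2) hA
    obtain ⟨-, -, hq⟩ := Finset.mem_offDiag.1 hq
    refine ⟨d q.1 q.2, (hd.nonneg _ _).lt_of_ne' (mt (hd.1 _ _).1 hq), ?_⟩
    exact fun x hx y hy hxy => hmin (x, y) (Finset.mem_offDiag.2 (by exact ⟨hx, hy, hxy⟩))

section BiInvMetric

variable {G : Type*} [Group G] {d : G → G → ℝ}

theorem IsBiInvMetric.apply_mul_one_le (hd : IsBiInvMetric d) (a b : G) :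
    d (a * b) 1 ≤ d a 1 + d b 1 := by
  have := hd.2.2 b a 1
  rw [one_mul] at this
  linarith [hd.1.2.2 (a * b) b 1]

theorem IsBiInvMetric.apply_inv_one (hd : IsBiInvMetric d) (a : G) : d a⁻¹ 1 = d a 1 := by
  rw [← hd.2.1 a, mul_inv_cancel, mul_one, hd.1.2.1]

end BiInvMetric

theorem IsBiInvMetric.le_mul_norm {α : Type*} [DecidableEq α]
    {d : FreeGroup α → FreeGroup α → ℝ} (hd : IsBiInvMetric d) {C : ℝ}
    (hC : ∀ i, d (FreeGroup.of i) 1 ≤ C) (g : FreeGroup α) :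
    d g 1 ≤ C * FreeGroup.norm g := by
  suffices ∀ L : List (α × Bool), d (FreeGroup.mk L) 1 ≤ C * L.length by
    simpa only [FreeGroup.norm, FreeGroup.mk_toWord] using this g.toWord
  intro L
  induction L with
  | nil => exact (show d 1 1 ≤ _ by simp [(hd.1.1 1 1).2 rfl])
  | cons x L ih =>
    have hx : d (FreeGroup.mk [x]) 1 ≤ C := by
      obtain ⟨i, _ | _⟩ := x
      · have : FreeGroup.mk [(i, false)] = (FreeGroup.of i)⁻¹ := by
          simp [FreeGroup.of, FreeGroup.inv_mk, FreeGroup.invRev]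
        rw [this, hd.apply_inv_one]
        exact hC i
      · exact hC i
    calc d (FreeGroup.mk (x :: L)) 1 = d (FreeGroup.mk [x] * FreeGroup.mk L) 1 := by
          rw [FreeGroup.mul_mk]; rfl
      _ ≤ C + C * L.length := (hd.apply_mul_one_le _ _).trans (add_le_add hx ih)
      _ = C * (x :: L).length := by push_cast [List.length_cons]; ring

section ChainSums

variable {G : Type*} [Group G] {A : Finset G} {w w' d : G → G → ℝ} {a b a' b' : G} {s t : ℝ}

-- `IsFinGenMetric d` unfolds to `IsLeast (chainSums A d a b) (d a b)` for all `a b`.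
def chainSums (A : Finset G) (w : G → G → ℝ) (a b : G) : Set ℝ :=
  {s | ∃ l : List (G × G), (∀ q ∈ l, q.1 ∈ A ∧ q.2 ∈ A) ∧ (l.map Prod.fst).prod = a ∧
    (l.map Prod.snd).prod = b ∧ s = (l.map fun q => w q.1 q.2).sum}

theorem mem_chainSums_singleton {x y : G} (hx : x ∈ A) (hy : y ∈ A) :
    w x y ∈ chainSums A w x y :=
  ⟨[(x, y)], by simp [hx, hy], by simp, by simp, by simp⟩

theorem add_mem_chainSums_mul (hs : s ∈ chainSums A w a b) (ht : t ∈ chainSums A w a' b') :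
    s + t ∈ chainSums A w (a * a') (b * b') := by
  obtain ⟨l, hl, rfl, rfl, rfl⟩ := hs
  obtain ⟨l', hl', rfl, rfl, rfl⟩ := ht
  exact ⟨l ++ l', List.forall_mem_append.2 ⟨hl, hl'⟩, by simp, by simp, by simp⟩

theorem mem_chainSums_swap (hw : ∀ x y, w x y = w y x) (hs : s ∈ chainSums A w a b) :
    s ∈ chainSums A w b a := by
  obtain ⟨l, hl, rfl, rfl, rfl⟩ := hs
  refine ⟨l.map Prod.swap, List.forall_mem_map.2 fun q hq => (hl q hq).symm,
    by simp [Function.comp_def], by simp [Function.comp_def], ?_⟩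
  simp only [List.map_map]
  exact congrArg List.sum (List.map_congr_left fun q _ => hw q.1 q.2)

theorem mul_mem_chainSums (K : ℝ) (hs : s ∈ chainSums A w a b) :
    K * s ∈ chainSums A (fun x y => K * w x y) a b := by
  obtain ⟨l, hl, rfl, rfl, rfl⟩ := hs
  exact ⟨l, hl, rfl, rfl, by rw [List.sum_map_mul_left]⟩

theorem exists_mem_chainSums_le (hle : ∀ x ∈ A, ∀ y ∈ A, w x y ≤ w' x y)
    (hs : s ∈ chainSums A w' a b) : ∃ t ∈ chainSums A w a b, t ≤ s := by
  obtain ⟨l, hl, rfl, rfl, rfl⟩ := hs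
  exact ⟨_, ⟨l, hl, rfl, rfl, rfl⟩, List.sum_le_sum fun q hq => hle _ (hl q hq).1 _ (hl q hq).2⟩

theorem nonneg_of_mem_chainSums (hw : ∀ x y, 0 ≤ w x y) (hs : s ∈ chainSums A w a b) :
    0 ≤ s := by
  obtain ⟨l, -, -, -, rfl⟩ := hs
  exact List.sum_nonneg (List.forall_mem_map.2 fun q _ => hw q.1 q.2)

theorem exists_nat_of_mem_chainSums {c : ℝ} (hw : ∀ x y, ∃ k : ℕ, w x y = c * k)
    (hs : s ∈ chainSums A w a b) : ∃ k : ℕ, s = c * k := by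
  obtain ⟨l, -, -, -, rfl⟩ := hs
  choose k hk using hw
  exact ⟨(l.map fun q => k q.1 q.2).sum, by simp [hk, List.sum_map_mul_left, Function.comp_def]⟩

theorem eq_of_zero_mem_chainSums (hw : ∀ x y, 0 ≤ w x y) (hw₀ : ∀ x y, w x y = 0 → x = y)
    (h : 0 ∈ chainSums A w a b) : a = b := by
  obtain ⟨l, -, rfl, rfl, hl⟩ := h
  have hnn : ∀ x ∈ l.map fun q => w q.1 q.2, 0 ≤ x := List.forall_mem_map.2 fun q _ => hw q.1 q.2
  congr 1
  exact List.map_congr_left fun q hq => hw₀ _ _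
    (List.all_zero_of_le_zero_le_of_sum_eq_zero hnn hl.symm (List.mem_map_of_mem hq))

theorem closure_eq_top_of_chainSums_nonempty (h : ∀ g, (chainSums A w g g).Nonempty) :
    Submonoid.closure (A : Set G) = ⊤ := by
  refine eq_top_iff.2 fun g _ => ?_
  obtain ⟨-, l, hl, rfl, -⟩ := h g
  exact Submonoid.list_prod_mem _ (by simpa using fun q hq => Submonoid.subset_closure (hl q hq).1)

theorem zero_mem_chainSums_self (hA : Submonoid.closure (A : Set G) = ⊤) (hw : ∀ x, w x x = 0)
    (g : G) : 0 ∈ chainSums A w g g := by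
  obtain ⟨l, hl, rfl⟩ := Submonoid.exists_list_of_mem_closure (hA ▸ Submonoid.mem_top g)
  exact ⟨l.map fun x => (x, x), by simpa using hl, by simp [Function.comp_def],
    by simp [Function.comp_def], by simp [Function.comp_def, hw]⟩

theorem chainSums_nonempty (hA : Submonoid.closure (A : Set G) = ⊤) (h1 : 1 ∈ A) (a b : G) :
    (chainSums A w a b).Nonempty := by
  obtain ⟨l, hl, rfl⟩ := Submonoid.exists_list_of_mem_closure (hA ▸ Submonoid.mem_top a)
  obtain ⟨l', hl', rfl⟩ := Submonoid.exists_list_of_mem_closure (hA ▸ Submonoid.mem_top b)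
  refine ⟨_, l.map (·, 1) ++ l'.map (1, ·), ?_, by simp [Function.comp_def],
    by simp [Function.comp_def], rfl⟩
  simp only [List.mem_append, List.mem_map]
  rintro q (⟨x, hx, rfl⟩ | ⟨x, hx, rfl⟩)
  exacts [⟨hl x hx, h1⟩, ⟨h1, hl' x hx⟩]

theorem IsBiInvMetric.le_of_mem_chainSums (hd : IsBiInvMetric d) (hs : s ∈ chainSums A d a b) :
    d a b ≤ s := by
  obtain ⟨l, -, rfl, rfl, rfl⟩ := hs
  induction l with
  | nil => simp [(hd.1.1 1 1).2 rfl]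
  | cons q l ih =>
    simp only [List.map_cons, List.prod_cons, List.sum_cons]
    calc d (q.1 * (l.map Prod.fst).prod) (q.2 * (l.map Prod.snd).prod)
        ≤ d (q.1 * (l.map Prod.fst).prod) (q.2 * (l.map Prod.fst).prod) +
          d (q.2 * (l.map Prod.fst).prod) (q.2 * (l.map Prod.snd).prod) := hd.1.2.2 _ _ _
      _ = d q.1 q.2 + d (l.map Prod.fst).prod (l.map Prod.snd).prod := by
          rw [hd.2.2, hd.2.1]
      _ ≤ _ := by gcongr

end ChainSums

section MinimalChainSums

variable {G : Type*} [Group G] {A : Finset G} {w d : G → G → ℝ}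

theorem isBiInvMetric_of_isLeast_chainSums (hw : ∀ x y, 0 ≤ w x y)
    (hw₀ : ∀ x y, w x y = 0 ↔ x = y) (hsymm : ∀ x y, w x y = w y x)
    (hd : ∀ a b, IsLeast (chainSums A w a b) (d a b)) : IsBiInvMetric d := by
  have hA := closure_eq_top_of_chainSums_nonempty fun g => ⟨_, (hd g g).1⟩
  have hmul : ∀ a b a' b', d (a * a') (b * b') ≤ d a b + d a' b' := fun a b a' b' =>
    (hd _ _).2 (add_mem_chainSums_mul (hd a b).1 (hd a' b').1)
  have hself : ∀ g, d g g = 0 := fun g => le_antisymm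
    ((hd g g).2 (zero_mem_chainSums_self hA (fun x => (hw₀ x x).2 rfl) g))
    (nonneg_of_mem_chainSums hw (hd g g).1)
  have hleft : ∀ g a b, d (g * a) (g * b) ≤ d a b := fun g a b => by
    simpa [hself] using hmul g g a b
  have hright : ∀ g a b, d (a * g) (b * g) ≤ d a b := fun g a b => by
    simpa [hself] using hmul a b g g
  refine ⟨⟨fun a b => ⟨fun h => ?_, fun h => h ▸ hself a⟩, fun a b => ?_, fun a b c => ?_⟩,
    fun g a b => ?_, fun g a b => ?_⟩
  · exact eq_of_zero_mem_chainSums hw (fun x y => (hw₀ x y).1) (h ▸ (hd a b).1)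
  · exact le_antisymm ((hd a b).2 (mem_chainSums_swap hsymm (hd b a).1))
      ((hd b a).2 (mem_chainSums_swap hsymm (hd a b).1))
  · calc d a c = d (a * b⁻¹ * b) (b * b⁻¹ * c) := by simp
      _ ≤ d (a * b⁻¹) (b * b⁻¹) + d b c := hmul _ _ _ _
      _ ≤ d a b + d b⁻¹ b⁻¹ + d b c := by gcongr; exact hmul _ _ _ _
      _ = d a b + d b c := by rw [hself, add_zero]
  · exact le_antisymm (hleft g a b) (by simpa using hleft g⁻¹ (g * a) (g * b))
  · exact le_antisymm (hright g a b) (by simpa using hright g⁻¹ (a * g) (b * g))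

theorem isFinGenMetric_of_isLeast_chainSums (h1 : 1 ∈ A) (hinv : ∀ a ∈ A, a⁻¹ ∈ A)
    (hw : ∀ x y, 0 ≤ w x y) (hw₀ : ∀ x y, w x y = 0 ↔ x = y) (hsymm : ∀ x y, w x y = w y x)
    (hd : ∀ a b, IsLeast (chainSums A w a b) (d a b)) : IsFinGenMetric d := by
  have hbi := isBiInvMetric_of_isLeast_chainSums hw hw₀ hsymm hd
  refine ⟨hbi, A, h1, hinv, fun a b => ⟨?_, fun s hs => hbi.le_of_mem_chainSums hs⟩⟩
  obtain ⟨t, ht, hle⟩ := exists_mem_chainSums_le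
    (fun x hx y hy => (hd x y).2 (mem_chainSums_singleton hx hy)) (hd a b).1
  rwa [le_antisymm hle (hbi.le_of_mem_chainSums ht)] at ht

theorem IsBiInvMetric.le_of_mem_chainSums_of_le {p : G → G → ℝ} {a b : G} {s : ℝ}
    (hp : IsBiInvMetric p) (hle : ∀ x ∈ A, ∀ y ∈ A, p x y ≤ w x y)
    (hs : s ∈ chainSums A w a b) : p a b ≤ s := by
  obtain ⟨t, ht, hts⟩ := exists_mem_chainSums_le hle hs
  exact (hp.le_of_mem_chainSums ht).trans hts

theorem le_mul_of_mem_chainSums {p : G → G → ℝ} {a b : G} {s m K : ℝ}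
    (hs : s ∈ chainSums A p a b) (hle : ∀ x ∈ A, ∀ y ∈ A, w x y ≤ K * p x y)
    (hm : m ∈ lowerBounds (chainSums A w a b)) : m ≤ K * s := by
  obtain ⟨t, ht, hts⟩ := exists_mem_chainSums_le hle (mul_mem_chainSums K hs)
  exact (hm ht).trans hts

theorem IsFinGenMetric.exists_discrete_approx {p : G → G → ℝ} (hp : IsFinGenMetric p) :
    ∃ μ > 0, ∀ c > 0, ∃ d : G → G → ℝ, IsFinGenMetric d ∧ (∀ a b, ∃ k : ℕ, d a b = c * k) ∧
      ∀ a b, p a b ≤ d a b ∧ d a b ≤ (1 + c / μ) * p a b := by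
  obtain ⟨hpbi, A, h1A, hAinv, hpA⟩ := hp
  obtain ⟨μ, hμ, hμA⟩ := hpbi.1.exists_pos_le_of_ne A
  refine ⟨μ, hμ, fun c hc => ?_⟩
  set w := fun x y => roundUp c (p x y)
  have hw : ∀ x y, 0 ≤ w x y := fun x y => (hpbi.1.nonneg x y).trans (le_roundUp hc _)
  have hw₀ : ∀ x y, w x y = 0 ↔ x = y := fun x y =>
    (roundUp_eq_zero_iff hc (hpbi.1.nonneg x y)).trans (hpbi.1.1 x y)
  have hsymm : ∀ x y, w x y = w y x := fun x y => congrArg (roundUp c) (hpbi.1.2.1 x y)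
  have hwℕ : ∀ x y, ∃ k : ℕ, w x y = c * k := fun x y => ⟨_, rfl⟩
  have hA := closure_eq_top_of_chainSums_nonempty fun g => ⟨_, (hpA g g).1⟩
  choose d hd using fun a b => Real.exists_isLeast_of_forall_mem_eq_mul_nat hc.le
    (chainSums_nonempty hA h1A a b) fun s hs => exists_nat_of_mem_chainSums hwℕ hs
  refine ⟨d, isFinGenMetric_of_isLeast_chainSums h1A hAinv hw hw₀ hsymm hd,
    fun a b => exists_nat_of_mem_chainSums hwℕ (hd a b).1, fun a b => ⟨?_, ?_⟩⟩
  · exact hpbi.le_of_mem_chainSums_of_le (fun x _ y _ => le_roundUp hc _) (hd a b).1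
  · exact le_mul_of_mem_chainSums (hpA a b).1 (fun x hx y hy => roundUp_le_mul hc hμ
      ((eq_or_ne x y).imp (hpbi.1.1 x y).2 (hμA x hx y hy))) (hd a b).2

end MinimalChainSums

/-- Every finitely generated metric `p` on the free group `F_n` can be
`ε`-approximated by a finitely generated metric `d` taking only rational values:
`|p(g,1) - d(g,1)| ≤ ε·|g|` for all `g ∈ F_n`, i.e. `dist(p,d) ≤ ε`. -/
theorem exists_rational_fin_gen_approximation (n : ℕ)
    (p : FreeGroup (Fin n) → FreeGroup (Fin n) → ℝ) (hp : IsFinGenMetric p)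
    (ε : ℝ) (hε : 0 < ε) :
    ∃ d : FreeGroup (Fin n) → FreeGroup (Fin n) → ℝ,
      IsFinGenMetric d ∧ (∀ a b, ∃ q : ℚ, d a b = (q : ℝ)) ∧
      ∀ g : FreeGroup (Fin n), |p g 1 - d g 1| ≤ ε * (FreeGroup.norm g : ℝ) := by
  obtain ⟨μ, hμ, happrox⟩ := hp.exists_discrete_approx
  set C := ∑ i, p (FreeGroup.of i) 1
  have hC : 0 ≤ C := Finset.sum_nonneg fun i _ => hp.1.1.nonneg _ _
  obtain ⟨c, hc, hcC⟩ :=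
    exists_rat_btwn (div_pos (mul_pos hε hμ) (add_pos_of_nonneg_of_pos hC one_pos))
  have hcμ : c / μ * C ≤ ε := by
    rw [lt_div_iff₀ (by positivity)] at hcC
    rw [div_mul_eq_mul_div, div_le_iff₀ hμ]
    nlinarith
  obtain ⟨d, hd, hdℕ, hpd⟩ := happrox c hc
  refine ⟨d, hd, fun a b => ?_, fun g => ?_⟩
  · obtain ⟨k, hk⟩ := hdℕ a b
    exact ⟨c * k, by rw [hk]; push_cast; ring⟩
  have hnorm : p g 1 ≤ C * FreeGroup.norm g := hp.1.le_mul_norm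
    (fun i => Finset.single_le_sum (fun j _ => hp.1.1.nonneg _ _) (Finset.mem_univ i)) g
  obtain ⟨hlow, hup⟩ := hpd g 1
  rw [abs_sub_comm, abs_of_nonneg (sub_nonneg.2 hlow)]
  calc d g 1 - p g 1 ≤ c / μ * p g 1 := by linarith
    _ ≤ c / μ * (C * FreeGroup.norm g) := by gcongr
    _ = c / μ * C * FreeGroup.norm g := by ring
    _ ≤ ε * FreeGroup.norm g := by gcongr
end

section
/- Let d be a bi-invariant metric bounded by 1 on the free group F_n with free generators f₁,…,f_n, let N₀ ∈ ℕ and ε > 0. Then there exists N ≥ N₀ such that the N-approximation p of d satisfies |d(g, 1) − p(g, 1)| ≤ ε·|g| for every g ∈ F_n (i.e. p is ε-close to d). Explicitly, N = max{N₀, ⌈1/ε⌉} works. -/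
/-- `p` is the `N`-approximation of a `1`-bounded bi-invariant metric `d` on a free group:
`p a b` is the minimum of `1` and of the sums `d a₁ b₁ + ⋯ + d aₘ bₘ` over all decompositions
`a = a₁⋯aₘ`, `b = b₁⋯bₘ` with all letters of reduced-word length at most `N`. -/
def IsNApproximation {n : ℕ}
    (d p : FreeGroup (Fin n) → FreeGroup (Fin n) → ℝ) (N : ℕ) : Prop :=
  ∀ a b : FreeGroup (Fin n),
    IsLeast {s : ℝ | ∃ l : List (FreeGroup (Fin n) × FreeGroup (Fin n)),
      (∀ q ∈ l, FreeGroup.norm q.1 ≤ N ∧ FreeGroup.norm q.2 ≤ N) ∧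
      (l.map Prod.fst).prod = a ∧ (l.map Prod.snd).prod = b ∧
      s = min 1 ((l.map fun q => d q.1 q.2).sum)} (p a b)

/-- For any bi-invariant metric `d` bounded by `1` on `F_n`, any `N₀` and any
`ε > 0`, there is `N ≥ N₀` (explicitly `N = max N₀ ⌈1/ε⌉`) such that the `N`-approximation `p`
of `d` is `ε`-close to `d`: `|d(g,1) - p(g,1)| ≤ ε·|g|` for all `g ∈ F_n`. -/
theorem N_approximation_is_close (n : ℕ)
    (d : FreeGroup (Fin n) → FreeGroup (Fin n) → ℝ)
    (hd : IsBiInvMetric d) (hbdd : ∀ a b, d a b ≤ 1)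
    (N₀ : ℕ) (ε : ℝ) (hε : 0 < ε) :
    ∃ N : ℕ, N₀ ≤ N ∧ N = max N₀ ⌈1/ε⌉₊ ∧
      ∀ p : FreeGroup (Fin n) → FreeGroup (Fin n) → ℝ, IsNApproximation d p N →
        ∀ g : FreeGroup (Fin n), |d g 1 - p g 1| ≤ ε * (FreeGroup.norm g : ℝ) := by
  refine ⟨max N₀ ⌈1/ε⌉₊, le_max_left _ _, rfl, ?_⟩
  intro p hp g
  obtain ⟨⟨hmet, hsymm, htri⟩, hlinv, hrinv⟩ := hd
  have hnonneg : ∀ x y, 0 ≤ d x y := by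
    intro x y
    have h1 := htri x y x
    have h2 := (hmet x x).mpr rfl
    have h3 := hsymm y x
    linarith
  have hsub : ∀ l : List (FreeGroup (Fin n) × FreeGroup (Fin n)),
      d (l.map Prod.fst).prod (l.map Prod.snd).prod ≤ (l.map fun q => d q.1 q.2).sum := by
    intro l
    induction l with
    | nil => simp [(hmet 1 1).mpr rfl]
    | cons q t ih =>
      simp only [List.map_cons, List.prod_cons, List.sum_cons]
      calc d (q.1 * (t.map Prod.fst).prod) (q.2 * (t.map Prod.snd).prod)
          ≤ d (q.1 * (t.map Prod.fst).prod) (q.2 * (t.map Prod.fst).prod)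
            + d (q.2 * (t.map Prod.fst).prod) (q.2 * (t.map Prod.snd).prod) := htri _ _ _
        _ = d q.1 q.2 + d (t.map Prod.fst).prod (t.map Prod.snd).prod := by
            rw [hrinv, hlinv]
        _ ≤ _ := by linarith [ih]
  obtain ⟨hmem, hlb⟩ := hp g 1
  obtain ⟨l, hlN, hfst, hsnd, hval⟩ := hmem
  have hd1 : d g 1 ≤ (l.map fun q => d q.1 q.2).sum := by
    rw [← hfst, ← hsnd]; exact hsub l
  have hge : d g 1 ≤ p g 1 := by
    rw [hval]; exact le_min (hbdd g 1) hd1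
  have hple1 : p g 1 ≤ 1 := by rw [hval]; exact min_le_left _ _
  by_cases hcase : FreeGroup.norm g ≤ max N₀ ⌈1/ε⌉₊
  · have hle : p g 1 ≤ d g 1 := by
      apply hlb
      refine ⟨[(g, 1)], ?_, by simp, by simp, ?_⟩
      · intro q hq
        simp only [List.mem_singleton] at hq
        subst hq
        exact ⟨hcase, by simp [FreeGroup.norm_one]⟩
      · simp [min_eq_right (hbdd g 1)]
    have heq : d g 1 = p g 1 := le_antisymm hge hle
    rw [heq, sub_self, abs_zero]
    positivity
  · push_neg at hcase
    have hceil : (1/ε) ≤ (⌈1/ε⌉₊ : ℝ) := Nat.le_ceil _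
    have h2 : (⌈1/ε⌉₊ : ℝ) ≤ (max N₀ ⌈1/ε⌉₊ : ℕ) := by exact_mod_cast le_max_right _ _
    have h3 : ((max N₀ ⌈1/ε⌉₊ : ℕ) : ℝ) < FreeGroup.norm g := by exact_mod_cast hcase
    have h1 : (1:ℝ) ≤ ε * FreeGroup.norm g := by
      have h4 : (1/ε) < (FreeGroup.norm g : ℝ) := by linarith
      have h5 := (div_lt_iff₀ hε).mp h4
      linarith [mul_comm (FreeGroup.norm g : ℝ) ε]
    have hd0 := hnonneg g 1
    rw [abs_sub_comm, abs_of_nonneg (by linarith)]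
    linarith
end

section
/- Let (G, d) be a group with a bi-invariant metric d. Suppose that for some a, b ∈ G and some a₁, b₁, …, a_n, b_n ∈ G with a = a₁·…·a_n and b = b₁·…·b_n we have d(a, b) = d(a₁, b₁) + … + d(a_n, b_n). Then for any 1 ≤ i ≤ j ≤ n we have d(a_i·…·a_j, b_i·…·b_j) = d(a_i, b_i) + … + d(a_j, b_j). -/
/-!
Bi-invariance makes `(a, b) ↦ d a b` subadditive on `G × G`, so `d (∏ aᵢ) (∏ bᵢ) ≤ ∑ d aᵢ bᵢ`
for every factorisation. Cutting a factorisation into two consecutive blocks, the total is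
bounded by the sum of the bounds for the blocks, so equality for the total forces equality for
each block; a segment is a block of a block.
-/

def IsAdditiveFactorization {G : Type*} [Monoid G] (d : G → G → ℝ) (l₁ l₂ : List G) : Prop :=
  d l₁.prod l₂.prod = (List.zipWith d l₁ l₂).sum

namespace IsBiInvMetric

variable {G : Type*} [Group G] {d : G → G → ℝ}

theorem dist_mul_mul_le (hd : IsBiInvMetric d) (a b p q : G) :
    d (a * p) (b * q) ≤ d a b + d p q :=
  calc d (a * p) (b * q) ≤ d (a * p) (b * p) + d (b * p) (b * q) := hd.1.2.2 _ _ _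
    _ = d a b + d p q := by rw [hd.2.2, hd.2.1]

theorem dist_prod_le_sum_zipWith (hd : IsBiInvMetric d) :
    ∀ {l₁ l₂ : List G}, l₁.length = l₂.length →
      d l₁.prod l₂.prod ≤ (List.zipWith d l₁ l₂).sum
  | [], [], _ => by simp [(hd.1.1 1 1).mpr rfl]
  | a :: l₁, b :: l₂, hlen => by
    simp only [List.prod_cons, List.zipWith_cons_cons, List.sum_cons]
    have ih := hd.dist_prod_le_sum_zipWith (l₁ := l₁) (l₂ := l₂) (by simpa using hlen)
    linarith [hd.dist_mul_mul_le a b l₁.prod l₂.prod]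

theorem isAdditiveFactorization_of_append (hd : IsBiInvMetric d) {u₁ u₂ v₁ v₂ : List G}
    (hu : u₁.length = u₂.length) (hv : v₁.length = v₂.length)
    (h : IsAdditiveFactorization d (u₁ ++ v₁) (u₂ ++ v₂)) :
    IsAdditiveFactorization d u₁ u₂ ∧ IsAdditiveFactorization d v₁ v₂ := by
  have hsum : (List.zipWith d (u₁ ++ v₁) (u₂ ++ v₂)).sum =
      (List.zipWith d u₁ u₂).sum + (List.zipWith d v₁ v₂).sum := by
    rw [List.zipWith_append hu, List.sum_append]
  have hsplit : d (u₁ ++ v₁).prod (u₂ ++ v₂).prod ≤ d u₁.prod u₂.prod + d v₁.prod v₂.prod := by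
    simpa only [List.prod_append] using hd.dist_mul_mul_le _ _ _ _
  have hu' := hd.dist_prod_le_sum_zipWith hu
  have hv' := hd.dist_prod_le_sum_zipWith hv
  unfold IsAdditiveFactorization at h ⊢
  constructor <;> linarith

theorem isAdditiveFactorization_take (hd : IsBiInvMetric d) {l₁ l₂ : List G}
    (hlen : l₁.length = l₂.length) (h : IsAdditiveFactorization d l₁ l₂) (k : ℕ) :
    IsAdditiveFactorization d (l₁.take k) (l₂.take k) := by
  rw [← List.take_append_drop k l₁, ← List.take_append_drop k l₂] at h
  exact (hd.isAdditiveFactorization_of_append (by simp [hlen]) (by simp [hlen]) h).1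

theorem isAdditiveFactorization_drop (hd : IsBiInvMetric d) {l₁ l₂ : List G}
    (hlen : l₁.length = l₂.length) (h : IsAdditiveFactorization d l₁ l₂) (k : ℕ) :
    IsAdditiveFactorization d (l₁.drop k) (l₂.drop k) := by
  rw [← List.take_append_drop k l₁, ← List.take_append_drop k l₂] at h
  exact (hd.isAdditiveFactorization_of_append (by simp [hlen]) (by simp [hlen]) h).2

end IsBiInvMetric

/-- Let `d` be a bi-invariant metric on a group `G`.  If
`a = a₁⋯aₙ`, `b = b₁⋯bₙ` (encoded as lists `l₁`, `l₂` of the same length) satisfy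
`d a b = d a₁ b₁ + ⋯ + d aₙ bₙ`, then for every contiguous segment (starting after position `i`
and of length `k`) the corresponding equality
`d (aᵢ₊₁⋯aᵢ₊ₖ) (bᵢ₊₁⋯bᵢ₊ₖ) = d aᵢ₊₁ bᵢ₊₁ + ⋯ + d aᵢ₊ₖ bᵢ₊ₖ` holds. -/
theorem biinv_metric_additive_on_segments {G : Type} [Group G]
    (d : G → G → ℝ) (hd : IsBiInvMetric d)
    (l₁ l₂ : List G) (hlen : l₁.length = l₂.length)
    (h : d l₁.prod l₂.prod = (List.zipWith d l₁ l₂).sum) :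
    ∀ i k : ℕ,
      d ((l₁.drop i).take k).prod ((l₂.drop i).take k).prod =
        (List.zipWith d ((l₁.drop i).take k) ((l₂.drop i).take k)).sum := by
  intro i k
  have hdrop := hd.isAdditiveFactorization_drop hlen h i
  exact hd.isAdditiveFactorization_take (by simp [hlen]) hdrop k
end
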